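/- arXiv:1406.3170 — 3 statements merged into one kernel-verified Lean document; each statement's English description precedes it below -/
import Mathlib

section
/- Let T be a finite binary tree in which every internal node has exactly two children, let each leaf ℓ carry a real true score score(ℓ), and let every node v carry a real estimate s(v) such that: (i) for every node v and every leaf ℓ in the subtree rooted at v, s(v) ≥ score(ℓ); (ii) for every internal node v with children u and w, s(u) ≤ s(v) and s(w) ≤ s(v); and (iii) for every leaf ℓ, s(ℓ) = score(ℓ). Consider the best-first (GREEDY) extraction process: maintain a finite multiset of nodes, initialized to the singleton {root}; at each step remove a node of maximum estimate from the multiset; if the removed node is a leaf, report it, otherwise insert its two children into the multiset; stop when the multiset is empty. Then the reported leaves appear in non-increasing order of true score; in particular, for every k, the first k reported leaves form a rank-safe top-k answer: every leaf among the first k reported has true score at least the true score of every leaf not among the first k reported. -/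
/-- A finite binary tree in which every internal node has exactly two children;
leaves carry labels from `α`. -/
inductive BinTree (α : Type*) : Type _
  | leaf : α → BinTree α
  | node : BinTree α → BinTree α → BinTree α

namespace BinTree

/-- All nodes (subtrees) of a binary tree. -/
def subtrees {α : Type*} : BinTree α → List (BinTree α)
  | leaf a => [leaf a]
  | node l r => node l r :: (l.subtrees ++ r.subtrees)

/-- The labels of the leaves of a binary tree, from left to right. -/
def leafLabels {α : Type*} : BinTree α → List α
  | leaf a => [a]
  | node l r => l.leafLabels ++ r.leafLabels

end BinTree

/-- One step of the best-first (GREEDY) extraction process: remove a node of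
maximum estimate from the multiset; if it is a leaf, report it, otherwise
insert its two children into the multiset. -/
inductive GreedyStep {α : Type*} (s : BinTree α → ℝ) :
    Multiset (BinTree α) × List α → Multiset (BinTree α) × List α → Prop
  | extract_leaf (M : Multiset (BinTree α)) (out : List α) (a : α)
      (hmax : ∀ t ∈ (BinTree.leaf a ::ₘ M), s t ≤ s (BinTree.leaf a)) :
      GreedyStep s (BinTree.leaf a ::ₘ M, out) (M, out ++ [a])
  | extract_node (M : Multiset (BinTree α)) (out : List α) (l r : BinTree α)
      (hmax : ∀ t ∈ (BinTree.node l r ::ₘ M), s t ≤ s (BinTree.node l r)) :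
      GreedyStep s (BinTree.node l r ::ₘ M, out) (l ::ₘ r ::ₘ M, out)

/-! The invariant behind the order: every leaf reported so far has true score at least the
estimate of every node still in the multiset. Extracting a node of maximum estimate keeps it,
because children have estimates at most their parent's; and when the extracted node is a leaf,
its true score equals its estimate, so it is at most every earlier score and at least every
remaining estimate. -/

namespace BinTree

variable {α : Type*}

lemma self_mem_subtrees (t : BinTree α) : t ∈ t.subtrees := by
  cases t <;> simp [subtrees]

lemma children_mem_subtrees_of_node_mem {T l r : BinTree α} (h : node l r ∈ T.subtrees) :
    l ∈ T.subtrees ∧ r ∈ T.subtrees := by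
  induction T with
  | leaf a => simp [subtrees] at h
  | node L R ihL ihR =>
    simp only [subtrees, List.mem_cons, List.mem_append, node.injEq] at h ⊢
    rcases h with ⟨rfl, rfl⟩ | h | h
    · exact ⟨.inr (.inl l.self_mem_subtrees), .inr (.inr r.self_mem_subtrees)⟩
    · exact (ihL h).imp (.inr ∘ .inl) (.inr ∘ .inl)
    · exact (ihR h).imp (.inr ∘ .inr) (.inr ∘ .inr)

end BinTree

section Greedy

variable {α : Type*}

open BinTree

structure GreedyInvariant (root : BinTree α) (score : α → ℝ) (s : BinTree α → ℝ)
    (p : Multiset (BinTree α) × List α) : Prop where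
  mem_subtrees : ∀ t ∈ p.1, t ∈ root.subtrees
  sorted : p.2.Pairwise (fun a b => score b ≤ score a)
  estimate_le_reported : ∀ a ∈ p.2, ∀ t ∈ p.1, s t ≤ score a

namespace GreedyInvariant

variable {root : BinTree α} {score : α → ℝ} {s : BinTree α → ℝ}

lemma init : GreedyInvariant root score s ({root}, []) where
  mem_subtrees t ht := by
    rw [Multiset.mem_singleton.mp ht]
    exact root.self_mem_subtrees
  sorted := .nil
  estimate_le_reported a ha := absurd ha List.not_mem_nil

lemma extract_leaf (hleaf : ∀ a : α, leaf a ∈ root.subtrees → s (leaf a) = score a)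
    {M : Multiset (BinTree α)} {out : List α} {a : α}
    (hmax : ∀ t ∈ leaf a ::ₘ M, s t ≤ s (leaf a))
    (hp : GreedyInvariant root score s (leaf a ::ₘ M, out)) :
    GreedyInvariant root score s (M, out ++ [a]) := by
  have hsa : s (leaf a) = score a := hleaf a (hp.mem_subtrees _ (Multiset.mem_cons_self _ _))
  refine ⟨fun t ht => hp.mem_subtrees t (Multiset.mem_cons_of_mem ht), ?_, ?_⟩
  · refine List.pairwise_append.mpr ⟨hp.sorted, List.pairwise_singleton _ _, ?_⟩
    rintro b hb c hc
    obtain rfl := List.mem_singleton.mp hc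
    exact hsa ▸ hp.estimate_le_reported b hb _ (Multiset.mem_cons_self _ _)
  · rintro b hb t ht
    rcases List.mem_append.mp hb with hb | hb
    · exact hp.estimate_le_reported b hb t (Multiset.mem_cons_of_mem ht)
    · obtain rfl := List.mem_singleton.mp hb
      exact hsa ▸ hmax t (Multiset.mem_cons_of_mem ht)

lemma extract_node (hmono : ∀ l r : BinTree α, node l r ∈ root.subtrees →
      s l ≤ s (node l r) ∧ s r ≤ s (node l r))
    {M : Multiset (BinTree α)} {out : List α} {l r : BinTree α}
    (hp : GreedyInvariant root score s (node l r ::ₘ M, out)) :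
    GreedyInvariant root score s (l ::ₘ r ::ₘ M, out) := by
  have hnode : node l r ∈ root.subtrees := hp.mem_subtrees _ (Multiset.mem_cons_self _ _)
  obtain ⟨hl, hr⟩ := children_mem_subtrees_of_node_mem hnode
  obtain ⟨hsl, hsr⟩ := hmono l r hnode
  refine ⟨?_, hp.sorted, ?_⟩
  · simp only [Multiset.mem_cons, forall_eq_or_imp]
    exact ⟨hl, hr, fun t ht => hp.mem_subtrees t (Multiset.mem_cons_of_mem ht)⟩
  · intro a ha
    have hnode_le := hp.estimate_le_reported a ha _ (Multiset.mem_cons_self _ _)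
    simp only [Multiset.mem_cons, forall_eq_or_imp]
    exact ⟨hsl.trans hnode_le, hsr.trans hnode_le,
      fun t ht => hp.estimate_le_reported a ha t (Multiset.mem_cons_of_mem ht)⟩

lemma of_reflTransGen
    (hmono : ∀ l r : BinTree α, node l r ∈ root.subtrees →
      s l ≤ s (node l r) ∧ s r ≤ s (node l r))
    (hleaf : ∀ a : α, leaf a ∈ root.subtrees → s (leaf a) = score a)
    {q : Multiset (BinTree α) × List α}
    (hrun : Relation.ReflTransGen (GreedyStep s) ({root}, []) q) :
    GreedyInvariant root score s q := by
  induction hrun with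
  | refl => exact init
  | tail _ hstep ih =>
    cases hstep with
    | extract_leaf M out a hmax => exact ih.extract_leaf hleaf hmax
    | extract_node M out l r _ => exact ih.extract_node hmono

end GreedyInvariant

end Greedy

theorem greedy_rank_safe_general {α : Type*} (root : BinTree α) (score : α → ℝ)
    (s : BinTree α → ℝ)
    (h2 : ∀ l r : BinTree α, BinTree.node l r ∈ root.subtrees →
      s l ≤ s (BinTree.node l r) ∧ s r ≤ s (BinTree.node l r))
    (h3 : ∀ a : α, BinTree.leaf a ∈ root.subtrees → s (BinTree.leaf a) = score a)
    (out : List α)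
    (hrun : Relation.ReflTransGen (GreedyStep s)
      (({root} : Multiset (BinTree α)), ([] : List α))
      ((0 : Multiset (BinTree α)), out)) :
    out.Pairwise (fun a b => score b ≤ score a) ∧
      ∀ k : ℕ, ∀ a ∈ out.take k, ∀ b ∈ out.drop k, score b ≤ score a := by
  have hsorted := (GreedyInvariant.of_reflTransGen h2 h3 hrun).sorted
  exact ⟨hsorted, fun _ _ ha _ hb => hsorted.rel_of_mem_take_of_mem_drop ha hb⟩

/-- The GREEDY extraction process reports the leaves in non-increasing order of
true score; in particular for every `k` the first `k` reported leaves are a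
rank-safe top-`k` answer. -/
theorem greedy_rank_safe {α : Type*} (root : BinTree α) (score : α → ℝ)
    (s : BinTree α → ℝ)
    (h1 : ∀ v ∈ root.subtrees, ∀ a ∈ v.leafLabels, score a ≤ s v)
    (h2 : ∀ l r : BinTree α, BinTree.node l r ∈ root.subtrees →
      s l ≤ s (BinTree.node l r) ∧ s r ≤ s (BinTree.node l r))
    (h3 : ∀ a : α, BinTree.leaf a ∈ root.subtrees → s (BinTree.leaf a) = score a)
    (out : List α)
    (hrun : Relation.ReflTransGen (GreedyStep s)
      (({root} : Multiset (BinTree α)), ([] : List α))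
      ((0 : Multiset (BinTree α)), out)) :
    out.Pairwise (fun a b => score b ≤ score a) ∧
      ∀ k : ℕ, ∀ a ∈ out.take k, ∀ b ∈ out.drop k, score b ≤ score a :=
  greedy_rank_safe_general root score s h2 h3 out hrun
end

section
/- Let T be a finite binary tree in which every internal node has exactly two children and whose leaves are labeled with elements of a set D. For an internal node u let ℛ_u be the set of labels occurring on leaves in both the left and the right subtree of u. Then for every node v of T, Σ_{u internal node in the subtree rooted at v} |ℛ_u| = (number of leaves in the subtree rooted at v) − (number of distinct labels occurring on leaves in the subtree rooted at v). -/
namespace BinTree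

/-- `∑ |ℛ_u|` over all internal nodes `u` of the tree, where `ℛ_u` is the set
of labels occurring on leaves in both the left and the right subtree of `u`. -/
def repListLengthSum {α : Type*} [DecidableEq α] : BinTree α → ℕ
  | leaf _ => 0
  | node l r =>
      (l.leafLabels.toFinset ∩ r.leafLabels.toFinset).card +
        repListLengthSum l + repListLengthSum r

end BinTree

lemma aux_card_le_length {α : Type*} [DecidableEq α] (l : List α) :
    l.toFinset.card ≤ l.length := by
  simpa using List.toFinset_card_le l

lemma aux_main {α : Type*} [DecidableEq α] (T : BinTree α) :
    T.repListLengthSum = T.leafLabels.length - T.leafLabels.toFinset.card := by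
  induction T with
  | leaf a => simp [BinTree.repListLengthSum, BinTree.leafLabels]
  | node l r ihl ihr =>
    have hl := aux_card_le_length l.leafLabels
    have hr := aux_card_le_length r.leafLabels
    have hu : (l.leafLabels.toFinset ∪ r.leafLabels.toFinset).card +
        (l.leafLabels.toFinset ∩ r.leafLabels.toFinset).card =
        l.leafLabels.toFinset.card + r.leafLabels.toFinset.card :=
      Finset.card_union_add_card_inter _ _
    have hle : (l.leafLabels.toFinset ∪ r.leafLabels.toFinset).card ≤
        l.leafLabels.length + r.leafLabels.length := by omega
    simp only [BinTree.repListLengthSum, BinTree.leafLabels, List.length_append,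
      List.toFinset_append]
    omega

/-- For every node `v` of a binary tree `T`, the total length of the repetition
lists of the internal nodes in the subtree rooted at `v` equals the number of
leaves below `v` minus the number of distinct labels occurring below `v`. -/
theorem repListLengthSum_eq {α : Type*} [DecidableEq α] (T : BinTree α) :
    ∀ v ∈ T.subtrees,
      v.repListLengthSum = v.leafLabels.length - v.leafLabels.toFinset.card := by
  intro v _
  exact aux_main v
end

section
/- Let T be a finite binary tree in which every internal node has exactly two children and whose leaves are labeled with elements of a set D, and let S ⊆ D be any subset of labels. For an internal node u let ℛ_u be the set of labels occurring on leaves in both the left and the right subtree of u. Then for every node v of T, Σ_{u internal node in the subtree rooted at v} |ℛ_u ∩ S| = (number of leaves in the subtree rooted at v whose label lies in S) − (number of distinct labels of S occurring on leaves in the subtree rooted at v). (This justifies computing the repetition count f_{C_v,q} − F_{C_v,q} for a sub-collection C_v by filtering the repetition array to the labels of C_v.) -/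
namespace BinTree

/-- `∑ |ℛ_u ∩ S|` over all internal nodes `u` of the tree, where `ℛ_u` is the
set of labels occurring on leaves in both the left and the right subtree of
`u`, filtered by the subset `S` of labels. -/
def repListLengthSumFiltered {α : Type*} [DecidableEq α] (S : Finset α) :
    BinTree α → ℕ
  | leaf _ => 0
  | node l r =>
      (l.leafLabels.toFinset ∩ r.leafLabels.toFinset ∩ S).card +
        repListLengthSumFiltered S l + repListLengthSumFiltered S r

end BinTree

lemma repList_key {α : Type*} [DecidableEq α] (S : Finset α) (v : BinTree α) :
    (v.leafLabels.filter (· ∈ S)).length =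
      v.repListLengthSumFiltered S + (v.leafLabels.toFinset ∩ S).card := by
  induction v with
  | leaf a =>
      by_cases h : a ∈ S <;>
        simp [BinTree.leafLabels, BinTree.repListLengthSumFiltered, h,
          Finset.singleton_inter_of_mem, Finset.singleton_inter_of_notMem]
  | node l r hl hr =>
      have key : ((l.leafLabels.toFinset ∪ r.leafLabels.toFinset) ∩ S).card +
          ((l.leafLabels.toFinset ∩ S) ∩ (r.leafLabels.toFinset ∩ S)).card =
          (l.leafLabels.toFinset ∩ S).card + (r.leafLabels.toFinset ∩ S).card := by
        rw [Finset.union_inter_distrib_right]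
        exact Finset.card_union_add_card_inter _ _
      have hAB : (l.leafLabels.toFinset ∩ S) ∩ (r.leafLabels.toFinset ∩ S) =
          l.leafLabels.toFinset ∩ r.leafLabels.toFinset ∩ S := by
        ext x; simp only [Finset.mem_inter]; tauto
      simp only [BinTree.leafLabels, BinTree.repListLengthSumFiltered,
        List.filter_append, List.length_append, List.toFinset_append, hl, hr]
      rw [hAB] at key
      omega

/-- For every node `v` of a binary tree `T` and every subset `S` of labels, the
total size of the `S`-filtered repetition lists of the internal nodes below `v`
equals the number of leaves below `v` with label in `S` minus the number of
distinct labels of `S` occurring on leaves below `v`. -/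
theorem repListLengthSumFiltered_eq {α : Type*} [DecidableEq α] (T : BinTree α)
    (S : Finset α) :
    ∀ v ∈ T.subtrees,
      v.repListLengthSumFiltered S =
        (v.leafLabels.filter (· ∈ S)).length -
          (v.leafLabels.toFinset ∩ S).card := by
  intro v _
  have := repList_key S v
  omega
end
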